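/- XOR discrepancy bound in the low-deficiency case: Let m ≥ 2 and let I be a nonempty finite index set. Let x (over [m]^I) and y (over ({0,1}^m)^I) be independent random variables such that Pr[x = a] ≤ 2 · m^(−0.9|I|) for every a ∈ [m]^I, and Pr[y = b] ≤ 2 · 2^(−|I|m) for every b ∈ ({0,1}^m)^I. Then |E[(−1)^(Σ_{i∈I} Ind_m(x_i, y_i))]| ≤ 2 · m^(−0.45|I|). -/

import Mathlib

/-!
Write the expectation as `∑_b py b * g b` with `g b = ∑_a px a * χ_a(b)`, where
`χ_a(b) = (-1) ^ ∑ i, b i (a i)`. Cauchy–Schwarz against the weights `py` gives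
`E² ≤ max py * ∑_b g(b)²`, and since the `χ_a` are orthogonal characters of `(Fin m → Bool)^I`,
Parseval turns `∑_b g(b)²` into `2^(m|I|) * ∑_a px(a)² ≤ 2^(m|I|) * max px`. The two point-mass
bounds then give `E² ≤ 4 * m^(-0.9|I|)`.
-/

open Finset

def boolSign (b : Bool) : ℝ := (-1) ^ (if b then 1 else 0)

lemma boolSign_mul_self (b : Bool) : boolSign b * boolSign b = 1 := by
  cases b <;> norm_num [boolSign]

lemma boolSign_not (b : Bool) : boolSign (!b) = -boolSign b := by
  cases b <;> norm_num [boolSign]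

lemma sum_boolSign_mul_boolSign {α : Type*} [Fintype α] [DecidableEq α] (u v : α) :
    ∑ c : α → Bool, boolSign (c u) * boolSign (c v) =
      if u = v then 2 ^ Fintype.card α else 0 := by
  split_ifs with huv
  · subst huv
    simp [boolSign_mul_self]
  · set flip := fun c : α → Bool => Function.update c u (!c u)
    have hflip : Function.Involutive flip := fun c => by simp [flip]
    have hneg : ∑ c : α → Bool, boolSign (c u) * boolSign (c v) =
        ∑ c : α → Bool, -(boolSign (c u) * boolSign (c v)) :=
      Fintype.sum_bijective flip hflip.bijective _ _ fun c => by
        simp [flip, Function.update_of_ne (Ne.symm huv), boolSign_not]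
    rw [sum_neg_distrib] at hneg
    linarith

section IndexCharacters

variable {α I : Type*} [Fintype I]

/-- `(-1) ^ ∑ i, Ind(a i, b i)`: as a function of `b`, the character of the group
`(α → Bool)^I` (coordinatewise xor) that reads bit `a i` of each `b i`. -/
def indexChar (a : I → α) (b : I → α → Bool) : ℝ := (-1) ^ ∑ i, if b i (a i) then 1 else 0

lemma indexChar_eq_prod (a : I → α) (b : I → α → Bool) :
    indexChar a b = ∏ i, boolSign (b i (a i)) :=
  (prod_pow_eq_pow_sum _ _ _).symm

variable [Fintype α] [DecidableEq α] [DecidableEq I]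

lemma sum_indexChar_mul_indexChar (a a' : I → α) :
    ∑ b, indexChar a b * indexChar a' b =
      if a = a' then 2 ^ (Fintype.card α * Fintype.card I) else 0 := by
  simp only [indexChar_eq_prod, ← prod_mul_distrib]
  rw [← Fintype.prod_sum fun i (c : α → Bool) => boolSign (c (a i)) * boolSign (c (a' i))]
  simp only [sum_boolSign_mul_boolSign]
  split_ifs with h
  · simp [h, pow_mul]
  · obtain ⟨i, hi⟩ := Function.ne_iff.mp h
    exact prod_eq_zero (mem_univ i) (if_neg hi)

lemma sum_sq_sum_mul_indexChar (f : (I → α) → ℝ) :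
    ∑ b, (∑ a, f a * indexChar a b) ^ 2 =
      2 ^ (Fintype.card α * Fintype.card I) * ∑ a, f a ^ 2 := by
  calc ∑ b, (∑ a, f a * indexChar a b) ^ 2
      = ∑ a, ∑ a', f a * f a' * ∑ b, indexChar a b * indexChar a' b := by
        simp_rw [sq, sum_mul_sum, mul_sum]
        rw [sum_comm]
        refine sum_congr rfl fun a _ => ?_
        rw [sum_comm]
        exact sum_congr rfl fun a' _ => sum_congr rfl fun b _ => by ring
    _ = 2 ^ (Fintype.card α * Fintype.card I) * ∑ a, f a ^ 2 := by
        simp [sum_indexChar_mul_indexChar, mul_sum, sq, mul_comm]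

end IndexCharacters

section Weights

variable {ι : Type*} [Fintype ι] {p : ι → ℝ} {P : ℝ}

lemma sum_sq_le_of_le (hp0 : ∀ i, 0 ≤ p i) (hp1 : ∑ i, p i = 1) (hP : ∀ i, p i ≤ P) :
    ∑ i, p i ^ 2 ≤ P :=
  calc ∑ i, p i ^ 2 ≤ ∑ i, P * p i :=
        sum_le_sum fun i _ => by rw [sq]; exact mul_le_mul_of_nonneg_right (hP i) (hp0 i)
    _ = P := by rw [← mul_sum, hp1, mul_one]

lemma sq_sum_mul_le_of_le (g : ι → ℝ) (hp0 : ∀ i, 0 ≤ p i) (hp1 : ∑ i, p i = 1)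
    (hP : ∀ i, p i ≤ P) : (∑ i, p i * g i) ^ 2 ≤ P * ∑ i, g i ^ 2 :=
  calc (∑ i, p i * g i) ^ 2 ≤ (∑ i, p i) * ∑ i, p i * g i ^ 2 :=
        sum_sq_le_sum_mul_sum_of_sq_le_mul _ (fun i _ => hp0 i)
          (fun i _ => mul_nonneg (hp0 i) (sq_nonneg _)) fun i _ => le_of_eq (by ring)
    _ ≤ P * ∑ i, g i ^ 2 := by
        rw [hp1, one_mul, mul_sum]
        exact sum_le_sum fun i _ => mul_le_mul_of_nonneg_right (hP i) (sq_nonneg _)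

end Weights

theorem xor_discrepancy_low_deficiency_general (m : ℕ)
    (I : Type) [Fintype I] [DecidableEq I]
    (px : (I → Fin m) → ℝ) (py : (I → Fin m → Bool) → ℝ)
    (hpx0 : ∀ a, 0 ≤ px a) (hpx1 : ∑ a, px a = 1)
    (hpy0 : ∀ b, 0 ≤ py b) (hpy1 : ∑ b, py b = 1)
    (hpx : ∀ a, px a ≤ 2 * (m : ℝ) ^ (-(0.9 * (Fintype.card I : ℝ))))
    (hpy : ∀ b, py b ≤ 2 * (2 : ℝ) ^ (-((Fintype.card I : ℝ) * (m : ℝ)))) :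
    |∑ a, ∑ b, px a * py b * (-1 : ℝ) ^ (∑ i, if b i (a i) then 1 else 0)| ≤
      2 * (m : ℝ) ^ (-(0.45 * (Fintype.card I : ℝ))) := by
  set c := Fintype.card I
  have hE : ∑ a, ∑ b, px a * py b * indexChar a b = ∑ b, py b * ∑ a, px a * indexChar a b := by
    rw [sum_comm]
    simp only [mul_sum]
    exact sum_congr rfl fun b _ => sum_congr rfl fun a _ => by ring
  have hcancel : (2 : ℝ) ^ (-((c : ℝ) * m)) * 2 ^ (m * c) = 1 := by
    rw [← Real.rpow_natCast, ← Real.rpow_add two_pos]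
    norm_num [mul_comm]
  have hsq : (m : ℝ) ^ (-(0.9 * (c : ℝ))) = ((m : ℝ) ^ (-(0.45 * (c : ℝ)))) ^ 2 := by
    rw [← Real.rpow_natCast, ← Real.rpow_mul m.cast_nonneg]
    ring_nf
  refine abs_le_of_sq_le_sq ?_ (by positivity)
  calc (∑ a, ∑ b, px a * py b * indexChar a b) ^ 2
      ≤ 2 * 2 ^ (-((c : ℝ) * m)) * ∑ b, (∑ a, px a * indexChar a b) ^ 2 := by
        rw [hE]; exact sq_sum_mul_le_of_le _ hpy0 hpy1 hpy
    _ = 2 * (2 ^ (-((c : ℝ) * m)) * 2 ^ (m * c)) * ∑ a, px a ^ 2 := by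
        rw [sum_sq_sum_mul_indexChar, Fintype.card_fin]; ring
    _ ≤ 2 * (2 * (m : ℝ) ^ (-(0.9 * (c : ℝ)))) := by
        rw [hcancel, mul_one]; gcongr; exact sum_sq_le_of_le hpx0 hpx1 hpx
    _ = (2 * (m : ℝ) ^ (-(0.45 * (c : ℝ)))) ^ 2 := by rw [hsq]; ring

/-- **XOR discrepancy bound in the low-deficiency case.** Let `m ≥ 2` and `I` a nonempty
finite index set. Let `x` (over `[m]^I`) and `y` (over `({0,1}^m)^I`) be independent
random variables (given by probability mass functions `px`, `py`) with
`Pr[x = a] ≤ 2·m^(−0.9|I|)` and `Pr[y = b] ≤ 2·2^(−|I|m)`. Then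
`|E[(−1)^(Σ_{i∈I} Ind_m(x_i,y_i))]| ≤ 2·m^(−0.45|I|)`. -/
theorem xor_discrepancy_low_deficiency (m : ℕ) (hm : 2 ≤ m)
    (I : Type) [Fintype I] [DecidableEq I] [Nonempty I]
    (px : (I → Fin m) → ℝ) (py : (I → Fin m → Bool) → ℝ)
    (hpx0 : ∀ a, 0 ≤ px a) (hpx1 : ∑ a, px a = 1)
    (hpy0 : ∀ b, 0 ≤ py b) (hpy1 : ∑ b, py b = 1)
    (hpx : ∀ a, px a ≤ 2 * (m : ℝ) ^ (-(0.9 * (Fintype.card I : ℝ))))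
    (hpy : ∀ b, py b ≤ 2 * (2 : ℝ) ^ (-((Fintype.card I : ℝ) * (m : ℝ)))) :
    |∑ a, ∑ b, px a * py b * (-1 : ℝ) ^ (∑ i, if b i (a i) then 1 else 0)| ≤
      2 * (m : ℝ) ^ (-(0.45 * (Fintype.card I : ℝ))) :=
  xor_discrepancy_low_deficiency_general m I px py hpx0 hpx1 hpy0 hpy1 hpx hpy
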